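/- Let G = ∏_{i=1}^t K_{n_i} be a Hamming graph with constant threshold 2, and let S be a nonempty vertex set. If the activation closure of S equals a disjoint union ∪_{i=1}^k x^i_{A_i} of subcubes with pairwise Hamming distance at least 3 between distinct subcubes, then ∑_{i=1}^k |A_i| ≥ (2 + t)·k − 2·|S|. -/

import Mathlib

/-- The Hamming graph `∏ K_{n i}`: vertices are tuples, adjacent iff they differ
in exactly one coordinate (Hamming distance 1). -/
def hammingGraph {t : ℕ} (n : Fin t → ℕ) : SimpleGraph (Π i, Fin (n i)) where
  Adj x y := hammingDist x y = 1
  symm := ⟨fun x y (h : hammingDist x y = 1) => (hammingDist_comm y x).trans h⟩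
  loopless := ⟨fun x (h : hammingDist x x = 1) => by simp [hammingDist_self] at h⟩

/-- The "subcube" `x_A`: all vertices agreeing with `x` on every coordinate in `A`. -/
def subcube {t : ℕ} {n : Fin t → ℕ} (x : Π i, Fin (n i)) (A : Set (Fin t)) :
    Set (Π i, Fin (n i)) :=
  {z | ∀ i ∈ A, z i = x i}

/-- A set `A` is closed under activation: every vertex with at least `θ v`
neighbors in `A` already belongs to `A`. -/
def activationClosed {V : Type*} [Fintype V] (G : SimpleGraph V) (θ : V → ℤ)
    (A : Set V) : Prop :=
  ∀ v : V, θ v ≤ ((A ∩ G.neighborSet v).ncard : ℤ) → v ∈ A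

/-- The activation closure `[S]_θ`: the smallest activation-closed superset of `S`. -/
def activationClosure {V : Type*} [Fintype V] (G : SimpleGraph V) (θ : V → ℤ)
    (S : Set V) : Set V :=
  ⋂₀ {A : Set V | S ⊆ A ∧ activationClosed G θ A}

/-!
Because the subcubes `x^i_{A_i}` are at distance at least 3, no vertex outside them has
neighbours in two of them, so the closure of `S` splits: the closure of `S ∩ x^i_{A_i}` is
`x^i_{A_i}` itself. It then suffices to show that a subcube `x_A` of dimension `d = t - |A|`
is the closure of a set `S'` only if `d + 2 ≤ 2 |S'|`.

Give a subcube of dimension `d` the potential `d + 2`. Start from the points of `S'`, of total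
potential `2 |S'|`, and, as long as two cubes of the family contain points at distance at most 2,
replace them by one subcube containing both: it needs at most the free coordinates of the two
cubes plus the (at most two) coordinates where those points differ, so the total potential does
not grow. The final family is pairwise far apart, so its union is closed and contains `x_A`; as
`x_A` is connected, it lies in a single cube of the family, whose potential is at most `2 |S'|`.
-/

namespace HammingBootstrap

open Function

section Activation

variable {V : Type*} [Fintype V] {G : SimpleGraph V} {θ : V → ℤ} {S A : Set V}

lemma subset_activationClosure : S ⊆ activationClosure G θ S :=
  fun _ hv => Set.mem_sInter.mpr fun _ hA => hA.1 hv

lemma activationClosure_subset (hSA : S ⊆ A) (hA : activationClosed G θ A) :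
    activationClosure G θ S ⊆ A :=
  Set.sInter_subset_of_mem ⟨hSA, hA⟩

lemma activationClosed_activationClosure : activationClosed G θ (activationClosure G θ S) := by
  intro v hv
  refine Set.mem_sInter.mpr fun A ⟨hSA, hA⟩ => hA v (hv.trans ?_)
  exact_mod_cast Set.ncard_le_ncard
    (Set.inter_subset_inter_left _ (activationClosure_subset hSA hA))

end Activation

lemma sum_ncard_inter_le {α ι : Type*} [Finite α] [Fintype ι] (S : Set α) {T : ι → Set α}
    (hT : Pairwise (Disjoint on T)) : ∑ i, (S ∩ T i).ncard ≤ S.ncard := by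
  rw [← finsum_eq_sum_of_fintype, ← Set.ncard_iUnion_of_finite (fun _ => Set.toFinite _)
    fun i j hij => (hT hij).mono Set.inter_subset_right Set.inter_subset_right]
  exact Set.ncard_le_ncard (Set.iUnion_subset fun _ => Set.inter_subset_left)

lemma sum_insert_le_add {ι : Type*} [DecidableEq ι] (f : ι → ℕ) (s : Finset ι) (a : ι) :
    ∑ i ∈ insert a s, f i ≤ f a + ∑ i ∈ s, f i := by
  by_cases ha : a ∈ s
  · rw [Finset.insert_eq_of_mem ha]
    exact Nat.le_add_left _ _
  · rw [Finset.sum_insert ha]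

section HammingDist

variable {ι : Type*} {β : ι → Type*} [Fintype ι] [∀ i, DecidableEq (β i)]

lemma hammingDist_update_le_one [DecidableEq ι] (z : Π i, β i) (i : ι) (a : β i) :
    hammingDist (update z i a) z ≤ 1 := by
  calc hammingDist (update z i a) z ≤ ({i} : Finset ι).card := by
        refine Finset.card_le_card fun j hj => Finset.mem_singleton.mpr ?_
        by_contra hji
        simp [update_of_ne hji] at hj
    _ = 1 := Finset.card_singleton i

lemma hammingDist_update_lt [DecidableEq ι] {x z : Π i, β i} {i : ι} (hi : z i ≠ x i) :
    hammingDist x (update z i (x i)) < hammingDist x z := by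
  refine Finset.card_lt_card ((Finset.ssubset_iff_of_subset ?_).mpr ⟨i, ?_, ?_⟩)
  · intro j hj
    rcases eq_or_ne j i with rfl | hji
    · simp at hj
    · simpa [update_of_ne hji] using hj
  · simpa using hi.symm
  · simp

lemma eq_update_of_hammingDist_eq_one [DecidableEq ι] {v w : Π i, β i} {i : ι}
    (h : hammingDist v w = 1) (hi : v i ≠ w i) : w = update v i (w i) := by
  obtain ⟨a, ha⟩ := Finset.card_eq_one.mp h
  have mem_iff : ∀ j, v j ≠ w j ↔ j = a := fun j => by
    simpa using congrArg (j ∈ ·) ha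
  funext j
  rcases eq_or_ne j i with rfl | hji
  · simp
  · rw [update_of_ne hji]
    by_contra hj
    exact hji (((mem_iff j).mp (Ne.symm hj)).trans ((mem_iff i).mp hi).symm)

/-- Two vertex sets are far apart when no vertex has a neighbour in both. -/
def FarApart (U W : Set (Π i, β i)) : Prop :=
  ∀ u ∈ U, ∀ v ∈ W, 3 ≤ hammingDist u v

lemma FarApart.mono {U U' W W' : Set (Π i, β i)} (h : FarApart U W) (hU : U' ⊆ U)
    (hW : W' ⊆ W) : FarApart U' W' :=
  fun u hu v hv => h u (hU hu) v (hW hv)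

lemma FarApart.disjoint {U W : Set (Π i, β i)} (h : FarApart U W) : Disjoint U W :=
  Set.disjoint_left.mpr fun u hu hw => by simpa using h u hu u hw

end HammingDist

section Subcube

variable {t : ℕ} {n : Fin t → ℕ}

lemma mem_subcube_self (x : Π i, Fin (n i)) (A : Set (Fin t)) : x ∈ subcube x A :=
  fun _ _ => rfl

lemma update_mem_subcube {x z : Π i, Fin (n i)} {A : Set (Fin t)} (hz : z ∈ subcube x A)
    {i : Fin t} {c : Fin (n i)} (hc : i ∉ A ∨ c = x i) : update z i c ∈ subcube x A := by
  intro j hj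
  rcases eq_or_ne j i with rfl | hji
  · rw [update_self]
    exact hc.resolve_left (not_not.mpr hj)
  · rw [update_of_ne hji]
    exact hz j hj

lemma subset_of_subcube_subset_subcube (hn : ∀ i, 2 ≤ n i) {x y : Π i, Fin (n i)}
    {A B : Set (Fin t)} (h : subcube x A ⊆ subcube y B) : B ⊆ A := by
  intro i hiB
  by_contra hiA
  have : Nontrivial (Fin (n i)) := Fin.nontrivial_iff_two_le.mpr (hn i)
  obtain ⟨c, hc⟩ := exists_ne (x i)
  have hupdate := h (update_mem_subcube (mem_subcube_self x A) (c := c) (Or.inl hiA)) i hiB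
  rw [update_self] at hupdate
  exact hc (hupdate.trans (h (mem_subcube_self x A) i hiB).symm)

/-- Walk from `x` to `z` inside `x_A`, fixing one coordinate at a time: consecutive points are
adjacent, so they lie in the same member. -/
lemma subcube_subset_of_subset_iUnion {ι : Type*} {T : ι → Set (Π i, Fin (n i))}
    (hfar : Pairwise (FarApart on T)) {x : Π i, Fin (n i)} {A : Set (Fin t)}
    (hcov : subcube x A ⊆ ⋃ j, T j) {a : ι} (hxa : x ∈ T a) : subcube x A ⊆ T a := by
  intro z hz
  induction h : hammingDist x z using Nat.strong_induction_on generalizing z with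
  | _ d ih =>
    rcases eq_or_ne z x with rfl | hzx
    · exact hxa
    obtain ⟨i, hi⟩ := ne_iff.mp hzx
    have hz' := update_mem_subcube hz (c := x i) (Or.inr rfl)
    have hz'a := ih _ (h ▸ hammingDist_update_lt hi) hz' rfl
    obtain ⟨b, hzb⟩ := Set.mem_iUnion.mp (hcov hz)
    rcases eq_or_ne b a with rfl | hba
    · exact hzb
    · have := hfar hba z hzb _ hz'a
      have := hammingDist_update_le_one z i (x i)
      rw [hammingDist_comm] at this
      omega

end Subcube

section Closed

variable {t : ℕ} {n : Fin t → ℕ} {θ : (Π i, Fin (n i)) → ℤ}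

/-- A vertex outside `x_A` differs from `x` at some `i ∈ A`, and its only possible neighbour
in `x_A` is obtained by correcting coordinate `i`. -/
lemma subcube_activationClosed (hθ : ∀ v, 2 ≤ θ v) (x : Π i, Fin (n i)) (A : Set (Fin t)) :
    activationClosed (hammingGraph n) θ (subcube x A) := by
  intro v hv
  by_contra hvA
  obtain ⟨i, hiA, hvi⟩ : ∃ i ∈ A, v i ≠ x i := by simpa [subcube] using hvA
  have hsub : subcube x A ∩ (hammingGraph n).neighborSet v ⊆ {update v i (x i)} := by
    rintro w ⟨hwA, hvw⟩
    rw [Set.mem_singleton_iff, ← hwA i hiA]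
    exact eq_update_of_hammingDist_eq_one hvw (by rwa [hwA i hiA])
  have hle := Set.ncard_le_ncard hsub
  rw [Set.ncard_singleton] at hle
  have := hθ v
  omega

/-- Two neighbours of a vertex are at distance at most 2, so all neighbours of a vertex in a
far-apart union lie in a single member. -/
lemma activationClosed_iUnion (hθ : ∀ v, 1 ≤ θ v) {ι : Type*}
    {T : ι → Set (Π i, Fin (n i))} (hT : ∀ j, activationClosed (hammingGraph n) θ (T j))
    (hfar : Pairwise (FarApart on T)) :
    activationClosed (hammingGraph n) θ (⋃ j, T j) := by
  intro v hv
  obtain ⟨w, hw, hvw⟩ : ((⋃ j, T j) ∩ (hammingGraph n).neighborSet v).Nonempty :=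
    Set.nonempty_of_ncard_ne_zero (by have := hθ v; omega)
  obtain ⟨a, hwa⟩ := Set.mem_iUnion.mp hw
  have hsub : (⋃ j, T j) ∩ (hammingGraph n).neighborSet v ⊆
      T a ∩ (hammingGraph n).neighborSet v := by
    rintro w' ⟨hw', hvw'⟩
    obtain ⟨b, hw'b⟩ := Set.mem_iUnion.mp hw'
    rcases eq_or_ne b a with rfl | hba
    · exact ⟨hw'b, hvw'⟩
    · have := hfar hba w' hw'b w hwa
      have := hammingDist_triangle w' v w
      have : hammingDist w' v = 1 := (hammingDist_comm _ _).trans hvw'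
      have : hammingDist v w = 1 := hvw
      omega
  exact Set.mem_iUnion.mpr ⟨a, hT a v (hv.trans (by exact_mod_cast Set.ncard_le_ncard hsub))⟩

/-- Replacing `T a` by the closure of `S ∩ T a` keeps the family closed and far apart, and it
still covers `S`. -/
lemma activationClosure_inter_eq (hθ : ∀ v, 1 ≤ θ v) {ι : Type*} [DecidableEq ι]
    {T : ι → Set (Π i, Fin (n i))} (hT : ∀ j, activationClosed (hammingGraph n) θ (T j))
    (hfar : Pairwise (FarApart on T)) {S : Set (Π i, Fin (n i))}
    (hS : activationClosure (hammingGraph n) θ S = ⋃ j, T j) (a : ι) :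
    activationClosure (hammingGraph n) θ (S ∩ T a) = T a := by
  refine (activationClosure_subset Set.inter_subset_right (hT a)).antisymm ?_
  set T' := update T a (activationClosure (hammingGraph n) θ (S ∩ T a))
  have hT'T : ∀ j, T' j ⊆ T j := (forall_update_iff T fun j U => U ⊆ T j).mpr
    ⟨activationClosure_subset Set.inter_subset_right (hT a), fun _ _ => subset_rfl⟩
  have hT'closed : ∀ j, activationClosed (hammingGraph n) θ (T' j) :=
    (forall_update_iff T fun _ U => activationClosed (hammingGraph n) θ U).mpr
      ⟨activationClosed_activationClosure, fun j _ => hT j⟩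
  have hST' : S ⊆ ⋃ j, T' j := by
    intro z hz
    obtain ⟨j, hzj⟩ := Set.mem_iUnion.mp (hS ▸ subset_activationClosure hz)
    refine Set.mem_iUnion.mpr ⟨j, ?_⟩
    rcases eq_or_ne j a with rfl | hja
    · simpa [T'] using subset_activationClosure (show z ∈ S ∩ T j from ⟨hz, hzj⟩)
    · simpa [T', hja] using hzj
  have hclosure := activationClosure_subset hST'
    (activationClosed_iUnion hθ hT'closed fun i j hij => (hfar hij).mono (hT'T i) (hT'T j))
  intro z hza
  obtain ⟨j, hzj⟩ := Set.mem_iUnion.mp (hclosure (hS ▸ Set.mem_iUnion_of_mem a hza))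
  rcases eq_or_ne j a with rfl | hja
  · simpa [T'] using hzj
  · exact absurd hza (Set.disjoint_left.mp (hfar hja).disjoint (hT'T j hzj))

end Closed

/-- The pair `(x, B)` presents the subcube `uncurry subcube (x, B) = x_B`, of dimension
`|Bᶜ|`. -/
abbrev PresentedCube {t : ℕ} (n : Fin t → ℕ) : Type := (Π i, Fin (n i)) × Set (Fin t)

section PresentedCube

variable {t : ℕ} {n : Fin t → ℕ}

noncomputable def potential (c : PresentedCube n) : ℕ := c.2ᶜ.ncard + 2

lemma exists_merge {c d : PresentedCube n} {u v : Π i, Fin (n i)}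
    (hu : u ∈ uncurry subcube c) (hv : v ∈ uncurry subcube d) (huv : hammingDist u v ≤ 2) :
    ∃ m : PresentedCube n, uncurry subcube c ⊆ uncurry subcube m ∧
      uncurry subcube d ⊆ uncurry subcube m ∧ potential m ≤ potential c + potential d := by
  refine ⟨(c.1, {i | i ∈ c.2 ∧ i ∈ d.2 ∧ c.1 i = d.1 i}), fun z hz i hi => hz i hi.1,
    fun z hz i hi => (hz i hi.2.1).trans hi.2.2.symm, ?_⟩
  have hfree :
      {i | i ∈ c.2 ∧ i ∈ d.2 ∧ c.1 i = d.1 i}ᶜ ⊆ c.2ᶜ ∪ d.2ᶜ ∪ {i | u i ≠ v i} := by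
    intro i hi
    by_contra h
    simp only [Set.mem_union, Set.mem_compl_iff, Set.mem_ofPred_eq, not_or, not_not] at h
    exact hi ⟨h.1.1, h.1.2, (hu i h.1.1).symm.trans (h.2.trans (hv i h.1.2))⟩
  have hdiff : {i | u i ≠ v i}.ncard = hammingDist u v := by
    simp [hammingDist, ← Set.ncard_coe_finset]
  calc potential (c.1, {i | i ∈ c.2 ∧ i ∈ d.2 ∧ c.1 i = d.1 i})
      ≤ (c.2ᶜ ∪ d.2ᶜ ∪ {i | u i ≠ v i}).ncard + 2 :=
        Nat.add_le_add_right (Set.ncard_le_ncard hfree) 2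
    _ ≤ c.2ᶜ.ncard + d.2ᶜ.ncard + {i | u i ≠ v i}.ncard + 2 := by
        gcongr
        exact (Set.ncard_union_le _ _).trans (Nat.add_le_add_right (Set.ncard_union_le _ _) _)
    _ ≤ potential c + potential d := by
        simp only [potential]
        omega

lemma exists_farApart_cover (s : Finset (PresentedCube n)) :
    ∃ s' : Finset (PresentedCube n),
      (s' : Set (PresentedCube n)).Pairwise (FarApart on uncurry subcube) ∧
      (⋃ c ∈ s, uncurry subcube c) ⊆ (⋃ c ∈ s', uncurry subcube c) ∧
      ∑ c ∈ s', potential c ≤ ∑ c ∈ s, potential c := by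
  classical
  induction h : s.card using Nat.strong_induction_on generalizing s with
  | _ k ih =>
  by_cases hfar : (s : Set (PresentedCube n)).Pairwise (FarApart on uncurry subcube)
  · exact ⟨s, hfar, subset_rfl, le_rfl⟩
  obtain ⟨c, hc, d, hd, hcd, u, hu, v, hv, huv⟩ : ∃ c ∈ s, ∃ d ∈ s, c ≠ d ∧
      ∃ u ∈ uncurry subcube c, ∃ v ∈ uncurry subcube d, hammingDist u v < 3 := by
    simpa [Set.Pairwise, FarApart, onFun] using hfar
  obtain ⟨m, hcm, hdm, hpot⟩ := exists_merge hu hv (by omega)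
  have hd' : d ∈ s.erase c := Finset.mem_erase.mpr ⟨hcd.symm, hd⟩
  set r := (s.erase c).erase d
  have hcard : (insert m r).card < k :=
    calc (insert m r).card ≤ r.card + 1 := Finset.card_insert_le m r
      _ ≤ (s.erase c).card := Finset.card_erase_lt_of_mem hd'
      _ < k := h ▸ Finset.card_erase_lt_of_mem hc
  obtain ⟨s', hfar', hcov', hpot'⟩ := ih _ hcard (insert m r) rfl
  refine ⟨s', hfar', ?_, ?_⟩
  · refine subset_trans (Set.iUnion₂_subset fun e he => ?_) hcov'
    have hm : uncurry subcube m ⊆ ⋃ c ∈ insert m r, uncurry subcube c :=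
      Finset.subset_set_biUnion_of_mem (f := uncurry subcube) (Finset.mem_insert_self m r)
    by_cases hec : e = c
    · exact hec ▸ hcm.trans hm
    by_cases hed : e = d
    · exact hed ▸ hdm.trans hm
    have her : e ∈ r := Finset.mem_erase.mpr ⟨hed, Finset.mem_erase.mpr ⟨hec, he⟩⟩
    exact Finset.subset_set_biUnion_of_mem (f := uncurry subcube) (Finset.mem_insert_of_mem her)
  · calc ∑ e ∈ s', potential e ≤ ∑ e ∈ insert m r, potential e := hpot'
      _ ≤ potential m + ∑ e ∈ r, potential e := sum_insert_le_add _ _ _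
      _ ≤ potential c + (potential d + ∑ e ∈ r, potential e) := by omega
      _ = ∑ e ∈ s, potential e := by
        rw [Finset.add_sum_erase _ _ hd', Finset.add_sum_erase _ _ hc]

lemma add_two_le_of_activationClosure_eq_subcube (hn : ∀ i, 2 ≤ n i)
    {S : Set (Π i, Fin (n i))} {x : Π i, Fin (n i)} {A : Set (Fin t)}
    (hS : activationClosure (hammingGraph n) (fun _ => 2) S = subcube x A) :
    t + 2 ≤ 2 * S.ncard + A.ncard := by
  classical
  set s₀ : Finset (PresentedCube n) := S.toFinset.image fun v => (v, Set.univ)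
  have hpot₀ : ∑ c ∈ s₀, potential c ≤ 2 * S.ncard := by
    rw [Finset.sum_congr rfl (g := fun _ => 2) (by simp [s₀, potential]), Finset.sum_const,
      smul_eq_mul, mul_comm, Set.ncard_eq_toFinset_card']
    exact Nat.mul_le_mul_left 2 Finset.card_image_le
  have hS₀ : S ⊆ ⋃ c ∈ s₀, uncurry subcube c := fun v hv =>
    Finset.subset_set_biUnion_of_mem (f := uncurry subcube)
      (Finset.mem_image_of_mem _ (Set.mem_toFinset.mpr hv)) (mem_subcube_self v Set.univ)
  obtain ⟨s, hfar, hcov, hpot⟩ := exists_farApart_cover s₀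
  have hs : ⋃ c ∈ s, uncurry subcube c = ⋃ c : s, uncurry subcube c := by
    rw [← Finset.set_biUnion_coe, Set.biUnion_eq_iUnion]
    rfl
  have hfar' : Pairwise (FarApart on fun c : s => uncurry subcube c.1) :=
    (pairwise_subtype_iff_pairwise_set _ _).mpr hfar
  have hclosed : activationClosed (hammingGraph n) (fun _ => 2) (⋃ c : s, uncurry subcube c) :=
    activationClosed_iUnion (fun _ => one_le_two)
      (fun c => subcube_activationClosed (fun _ => le_rfl) _ _) hfar'
  have hA : subcube x A ⊆ ⋃ c : s, uncurry subcube c :=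
    hS ▸ activationClosure_subset (hs ▸ hS₀.trans hcov) hclosed
  obtain ⟨p, hxp⟩ := Set.mem_iUnion.mp (hA (mem_subcube_self x A))
  have hpA : p.1.2 ⊆ A :=
    subset_of_subcube_subset_subcube hn (subcube_subset_of_subset_iUnion hfar' hA hxp)
  calc t + 2 = Aᶜ.ncard + A.ncard + 2 := by
        rw [add_comm Aᶜ.ncard, Set.ncard_add_ncard_compl, Nat.card_fin]
    _ ≤ potential p.1 + A.ncard := by
        simp only [potential]
        have := Set.ncard_le_ncard (Set.compl_subset_compl.mpr hpA)
        omega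
    _ ≤ ∑ c ∈ s, potential c + A.ncard :=
        Nat.add_le_add_right (Finset.single_le_sum (fun _ _ => Nat.zero_le _) p.2) _
    _ ≤ 2 * S.ncard + A.ncard := by omega

end PresentedCube

end HammingBootstrap

open HammingBootstrap in
theorem closure_union_subcubes_card_bound_general {t : ℕ} (n : Fin t → ℕ)
    (hn : ∀ i, 2 ≤ n i) (S : Set (Π i, Fin (n i)))
    (k : ℕ) (x : Fin k → Π i, Fin (n i)) (A : Fin k → Set (Fin t))
    (hclos : activationClosure (hammingGraph n) (fun _ => (2 : ℤ)) S =
      ⋃ i : Fin k, subcube (x i) (A i))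
    (hdist : ∀ i j : Fin k, i ≠ j →
      ∀ u ∈ subcube (x i) (A i), ∀ v ∈ subcube (x j) (A j), 3 ≤ hammingDist u v) :
    ((2 + t : ℤ)) * k - 2 * S.ncard ≤ ∑ i : Fin k, ((A i).ncard : ℤ) := by
  have hcube (i : Fin k) : t + 2 ≤ 2 * (S ∩ subcube (x i) (A i)).ncard + (A i).ncard :=
    add_two_le_of_activationClosure_eq_subcube hn <| activationClosure_inter_eq
      (fun _ => one_le_two) (fun _ => subcube_activationClosed (fun _ => le_rfl) _ _) hdist hclos i
  have hsplit := sum_ncard_inter_le S fun i j hij => FarApart.disjoint (hdist i j hij)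
  have hsum := Finset.sum_le_sum fun i (_ : i ∈ Finset.univ) => hcube i
  rw [Finset.sum_const, Finset.card_univ, Fintype.card_fin, smul_eq_mul, Finset.sum_add_distrib,
    ← Finset.mul_sum] at hsum
  rw [← Nat.cast_sum]
  have hcount : k * (t + 2) ≤ 2 * S.ncard + ∑ i, (A i).ncard := by omega
  push_cast at hcount ⊢
  linarith

theorem closure_union_subcubes_card_bound {t : ℕ} (n : Fin t → ℕ)
    (hn : ∀ i, 2 ≤ n i) (S : Set (Π i, Fin (n i))) (hS : S.Nonempty)
    (k : ℕ) (x : Fin k → Π i, Fin (n i)) (A : Fin k → Set (Fin t))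
    (hclos : activationClosure (hammingGraph n) (fun _ => (2 : ℤ)) S =
      ⋃ i : Fin k, subcube (x i) (A i))
    (hdist : ∀ i j : Fin k, i ≠ j →
      ∀ u ∈ subcube (x i) (A i), ∀ v ∈ subcube (x j) (A j), 3 ≤ hammingDist u v) :
    ((2 + t : ℤ)) * k - 2 * S.ncard ≤ ∑ i : Fin k, ((A i).ncard : ℤ) :=
  closure_union_subcubes_card_bound_general n hn S k x A hclos hdist
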